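/- arXiv:1408.4110 — 2 statements merged into one kernel-verified Lean document; each statement's English description precedes it below -/
import Mathlib

section
/- For every n ≥ 2 and every 1 ≤ k ≤ n−1, the algebra endomorphism φ_{σ_k} of 𝒜_n is bijective; that is, φ_{σ_k} is an algebra automorphism of 𝒜_n. -/
open scoped TensorProduct

/-- Generator index set for the algebra `𝒜ₙ`: pairs `(i,j)` with `1 ≤ i,j ≤ n`, `i ≠ j`. -/
abbrev Idx (n : ℕ) : Type := {q : ℕ × ℕ // q.1 ≠ q.2 ∧ 1 ≤ q.1 ∧ q.1 ≤ n ∧ 1 ≤ q.2 ∧ q.2 ≤ n}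

/-- `𝒜ₙ`, the free noncommutative unital `ℤ`-algebra on the generators `a_{ij}`. -/
abbrev FA (n : ℕ) : Type := FreeAlgebra ℤ (Idx n)

/-- The generator `a_{ij}` when the indices are in range (`1 ≤ i,j ≤ n`, `i ≠ j`); `0` otherwise. -/
noncomputable def gen (n i j : ℕ) : FA n :=
  if h : i ≠ j ∧ 1 ≤ i ∧ i ≤ n ∧ 1 ≤ j ∧ j ≤ n then FreeAlgebra.ι ℤ (⟨(i, j), h⟩ : Idx n) else 0

/-- Image of the generator `a_{ij}` under `φ_{σ_k}`. -/
noncomputable def phiGenImg (n k i j : ℕ) : FA n :=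
  if i = k then
    (if j = k + 1 then -gen n (k+1) k
     else gen n (k+1) j - gen n (k+1) k * gen n k j)
  else if i = k + 1 then
    (if j = k then -gen n k (k+1) else gen n k j)
  else
    if j = k then gen n i (k+1) - gen n i k * gen n k (k+1)
    else if j = k + 1 then gen n i k
    else gen n i j

/-- Image of the generator `a_{ij}` under `φ_{σ_k}⁻¹ = φ_{σ_k⁻¹}`. -/
noncomputable def phiInvGenImg (n k i j : ℕ) : FA n :=
  if i = k + 1 then
    (if j = k then -gen n k (k+1)
     else gen n k j - gen n k (k+1) * gen n (k+1) j)
  else if i = k then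
    (if j = k + 1 then -gen n (k+1) k else gen n (k+1) j)
  else
    if j = k + 1 then gen n i k - gen n i (k+1) * gen n (k+1) k
    else if j = k then gen n i (k+1)
    else gen n i j

/-- `φ_{σ_k}` for the letter `(k, true)` and `φ_{σ_k⁻¹}` for the letter `(k, false)`. -/
noncomputable def phiLetter (n : ℕ) (l : ℕ × Bool) : FA n →ₐ[ℤ] FA n :=
  FreeAlgebra.lift ℤ fun g : Idx n =>
    if l.2 then phiGenImg n l.1 g.val.1 g.val.2 else phiInvGenImg n l.1 g.val.1 g.val.2

/-- `φ_β` for a word `β` in the letters `σ_k^{±1}`, with `φ_{β₁β₂} = φ_{β₁} ∘ φ_{β₂}`. -/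
noncomputable def phiWord (n : ℕ) (w : List (ℕ × Bool)) : FA n →ₐ[ℤ] FA n :=
  w.foldr (fun l f => (phiLetter n l).comp f) (AlgHom.id ℤ (FA n))

/-- `β` is a word in the generators `σ_1^{±1}, …, σ_{n−1}^{±1}` of the braid group `B_n`. -/
def WordIn (n : ℕ) (w : List (ℕ × Bool)) : Prop := ∀ l ∈ w, 1 ≤ l.1 ∧ l.1 + 1 ≤ n

/-- The natural inclusion `𝒜ₙ → 𝒜ₙ₊₁`. -/
noncomputable def incl (n : ℕ) : FA n →ₐ[ℤ] FA (n+1) :=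
  FreeAlgebra.lift ℤ fun g : Idx n => gen (n+1) g.val.1 g.val.2

/-- `M` (a matrix recorded as a function `ℕ → ℕ → 𝒜ₙ`, supported on `[1,n] × [1,n]`)
is the matrix `Φ^L_β`:  `φ*_β(a_{i,n+1}) = ∑_j M_{ij} a_{j,n+1}`. -/
def IsPhiL (n : ℕ) (w : List (ℕ × Bool)) (M : ℕ → ℕ → FA n) : Prop :=
  (∀ i j, i ∉ Finset.Icc 1 n ∨ j ∉ Finset.Icc 1 n → M i j = 0) ∧
  ∀ i ∈ Finset.Icc 1 n,
    phiWord (n+1) w (gen (n+1) i (n+1)) =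
      ∑ j ∈ Finset.Icc 1 n, incl n (M i j) * gen (n+1) j (n+1)

/-- `M` is the matrix `Φ^R_β`:  `φ*_β(a_{n+1,i}) = ∑_j a_{n+1,j} M_{ji}`. -/
def IsPhiR (n : ℕ) (w : List (ℕ × Bool)) (M : ℕ → ℕ → FA n) : Prop :=
  (∀ i j, i ∉ Finset.Icc 1 n ∨ j ∉ Finset.Icc 1 n → M i j = 0) ∧
  ∀ i ∈ Finset.Icc 1 n,
    phiWord (n+1) w (gen (n+1) (n+1) i) =
      ∑ j ∈ Finset.Icc 1 n, gen (n+1) (n+1) j * incl n (M j i)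

/-- The permutation (of `ℕ`, via 1-based strand labels) determined by a braid word,
with `perm (w₁ ++ w₂) = perm w₁ * perm w₂`. -/
def permWord (w : List (ℕ × Bool)) : Equiv.Perm ℕ :=
  w.foldr (fun l f => Equiv.swap l.1 (l.1 + 1) * f) 1

/-- The writhe (exponent sum) of a braid word. -/
def writhe (w : List (ℕ × Bool)) : ℤ :=
  (w.map fun l => if l.2 then (1 : ℤ) else -1).sum

/-- Conjugation, as an algebra map to the opposite algebra. -/
noncomputable def conjHom (n : ℕ) : FA n →ₐ[ℤ] (FA n)ᵐᵒᵖ :=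
  FreeAlgebra.lift ℤ fun g : Idx n => MulOpposite.op (gen n g.val.2 g.val.1)

/-- Conjugation `x ↦ x̄`: the `ℤ`-linear anti-automorphism with `a_{ij} ↦ a_{ji}`. -/
noncomputable def conj (n : ℕ) (x : FA n) : FA n := (conjHom n x).unop

/-- Conjugation as a `ℤ`-linear map. -/
noncomputable def conjLin (n : ℕ) : FA n →ₗ[ℤ] FA n :=
  (MulOpposite.opLinearEquiv ℤ).symm.toLinearMap ∘ₗ (conjHom n).toLinearMap

/-- The word `τ_{a,p} = σ_a σ_{a+1} ⋯ σ_{a+p−1}`. -/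
def tauWord (a p : ℕ) : List (ℕ × Bool) := (List.range p).map fun t => (a + t, true)

/-- The word `κ_{a,l} = τ_{a+l−1,p} τ_{a+l−2,p} ⋯ τ_{a,p}`. -/
def kappaWord (a l p : ℕ) : List (ℕ × Bool) :=
  (((List.range l).reverse).map fun t => tauWord (a + t) p).flatten

/-- The inverse of a braid word. -/
def invWord (w : List (ℕ × Bool)) : List (ℕ × Bool) := w.reverse.map fun l => (l.1, !l.2)

/-- The `p`-cable `α^{(p)}` of a braid word `α` (each strand replaced by `p` parallel strands):
substitute `σ_m ↦ κ_{(m−1)p+1,p}` and `σ_m⁻¹ ↦ κ_{(m−1)p+1,p}⁻¹`. -/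
def cable (p : ℕ) (w : List (ℕ × Bool)) : List (ℕ × Bool) :=
  (w.map fun l =>
    if l.2 then kappaWord ((l.1 - 1) * p + 1) p p
    else invWord (kappaWord ((l.1 - 1) * p + 1) p p)).flatten

/-- The product `a_{x₁x₂} a_{x₂x₃} ⋯ a_{x_{m-1}x_m}` along a list `[x₁, …, x_m]`
(`1` for lists of length `≤ 1`). -/
noncomputable def pathFactors (n : ℕ) : List ℕ → FA n
  | x :: y :: rest => gen n x y * pathFactors n (y :: rest)
  | _ => 1

/-- `A(i,j,X) = Σ_{Y ⊆ X} (−1)^{|Y|} a_{i y₁} a_{y₁ y₂} ⋯ a_{y_k j}` (ascending order on `Y`). -/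
noncomputable def Aexp (n i j : ℕ) (X : Finset ℕ) : FA n :=
  ∑ Y ∈ X.powerset, ((-1 : ℤ) ^ Y.card) • pathFactors n (i :: (Y.sort (· ≤ ·) ++ [j]))

/-- `A'(i,j,X) = Σ_{Y ⊆ X} (−1)^{|Y|} a_{i y_k} a_{y_k y_{k−1}} ⋯ a_{y₁ j}` (descending order). -/
noncomputable def A'exp (n i j : ℕ) (X : Finset ℕ) : FA n :=
  ∑ Y ∈ X.powerset, ((-1 : ℤ) ^ Y.card) • pathFactors n (i :: ((Y.sort (· ≤ ·)).reverse ++ [j]))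

/-- `B'(i,j,X) = Σ_{Y ⊆ X, min Y ≠ j} c_Y a_{i y_k} ⋯ a_{y₁ j}`, where `c_Y = (−1)^{|Y|+1}` if all
elements of `Y` exceed `j` (including `Y = ∅`), and `c_Y = (−1)^{|Y|}` otherwise. -/
noncomputable def B'exp (n i j : ℕ) (X : Finset ℕ) : FA n :=
  ∑ Y ∈ X.powerset.filter (fun Y => Y.min ≠ (j : WithTop ℕ)),
    (if ∀ y ∈ Y, j < y then ((-1 : ℤ) ^ (Y.card + 1)) else ((-1 : ℤ) ^ Y.card)) •
      pathFactors n (i :: ((Y.sort (· ≤ ·)).reverse ++ [j]))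

/-- For `i = (q_i − 1)p + r_i` with `1 ≤ r_i ≤ p`: the quotient `q_i`. -/
def qIdx (p i : ℕ) : ℕ := (i - 1) / p + 1

/-- For `i = (q_i − 1)p + r_i` with `1 ≤ r_i ≤ p`: the remainder `r_i`. -/
def rIdx (p i : ℕ) : ℕ := (i - 1) % p + 1

attribute [local instance high] Algebra.toModule

/-- The homomorphism `ψ : 𝒜_{kp} → 𝒜_k ⊗ 𝒜_p`. -/
noncomputable def psi (k p : ℕ) : FA (k * p) →ₐ[ℤ] FA k ⊗[ℤ] FA p :=
  FreeAlgebra.lift ℤ fun g : Idx (k * p) =>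
    if qIdx p g.val.1 = qIdx p g.val.2 then
      (1 : FA k) ⊗ₜ[ℤ] gen p (rIdx p g.val.1) (rIdx p g.val.2)
    else if rIdx p g.val.1 = rIdx p g.val.2 then
      gen k (qIdx p g.val.1) (qIdx p g.val.2) ⊗ₜ[ℤ] (1 : FA p)
    else if (qIdx p g.val.1 < qIdx p g.val.2 ∧ rIdx p g.val.2 < rIdx p g.val.1) ∨
            (qIdx p g.val.2 < qIdx p g.val.1 ∧ rIdx p g.val.1 < rIdx p g.val.2) then 0
    else gen k (qIdx p g.val.1) (qIdx p g.val.2) ⊗ₜ[ℤ] gen p (rIdx p g.val.1) (rIdx p g.val.2)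

/-- `ψ*(x · a_{i,*}) = ψ(x) · (a_{q_i,*} ⊗ a_{r_i,*})`, the image of the element `x · a_{i,*}`
of `𝒜_{kp}^L` under `ψ* : 𝒜_{kp}^L → 𝒜_k^L ⊗ 𝒜_p^L`, the target realized inside
`𝒜_{k+1} ⊗ 𝒜_{p+1}`. -/
noncomputable def psiStarElt (k p : ℕ) (x : FA (k * p)) (i : ℕ) :
    FA (k+1) ⊗[ℤ] FA (p+1) :=
  (Algebra.TensorProduct.map (incl k) (incl p)) (psi k p x) *
    (gen (k+1) (qIdx p i) (k+1) ⊗ₜ[ℤ] gen (p+1) (rIdx p i) (p+1))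

/-- The `(i,j)` entry of `Δ(β) = diag[(−1)^{w(β)}, 1, …, 1]` (1-based indices). -/
noncomputable def deltaEnt (w : List (ℕ × Bool)) (i j : ℕ) : ℂ :=
  if i = j then (if i = 1 then (-1 : ℂ) ^ writhe w else 1) else 0

/-! The map `φ_{σ_k⁻¹}` (`phiLetter n (k, false)`) is a two-sided inverse of `φ_{σ_k}`. Both
composites are algebra maps out of a free algebra, so it suffices to check them on the generators
`a_{ij}`, where it is a finite case analysis on whether `i` and `j` lie in `{k, k + 1}`. -/

section

variable {n : ℕ}

lemma gen_eq_ι {i j : ℕ} (h : i ≠ j ∧ 1 ≤ i ∧ i ≤ n ∧ 1 ≤ j ∧ j ≤ n) :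
    gen n i j = FreeAlgebra.ι ℤ ⟨(i, j), h⟩ :=
  dif_pos h

lemma algHom_ext_gen {A : Type*} [Semiring A] [Algebra ℤ A] {f g : FA n →ₐ[ℤ] A}
    (h : ∀ i j, i ≠ j → 1 ≤ i → i ≤ n → 1 ≤ j → j ≤ n → f (gen n i j) = g (gen n i j)) :
    f = g := by
  refine FreeAlgebra.hom_ext (funext fun ⟨⟨i, j⟩, hij⟩ => ?_)
  simpa [gen_eq_ι hij] using h i j hij.1 hij.2.1 hij.2.2.1 hij.2.2.2.1 hij.2.2.2.2

lemma phiLetter_true_gen (k : ℕ) {i j : ℕ}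
    (hij : i ≠ j) (hi : 1 ≤ i) (hi' : i ≤ n) (hj : 1 ≤ j) (hj' : j ≤ n) :
    phiLetter n (k, true) (gen n i j) = phiGenImg n k i j := by
  simp [gen_eq_ι ⟨hij, hi, hi', hj, hj'⟩, phiLetter]

lemma phiLetter_false_gen (k : ℕ) {i j : ℕ}
    (hij : i ≠ j) (hi : 1 ≤ i) (hi' : i ≤ n) (hj : 1 ≤ j) (hj' : j ≤ n) :
    phiLetter n (k, false) (gen n i j) = phiInvGenImg n k i j := by
  simp [gen_eq_ι ⟨hij, hi, hi', hj, hj'⟩, phiLetter]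

lemma phiLetter_false_comp_true {k : ℕ} (hk : 1 ≤ k) (hk' : k + 1 ≤ n) :
    (phiLetter n (k, false)).comp (phiLetter n (k, true)) = AlgHom.id ℤ (FA n) := by
  refine algHom_ext_gen fun i j hij hi hi' hj hj' => ?_
  simp only [AlgHom.comp_apply, AlgHom.id_apply, phiLetter_true_gen k hij hi hi' hj hj']
  unfold phiGenImg
  -- `Ne.symm`, discharged by `omega`, decides the index comparisons left in the `if`s
  split_ifs <;> subst_vars <;>
    simp (disch := omega) [phiLetter_false_gen, phiInvGenImg, Ne.symm]

lemma phiLetter_true_comp_false {k : ℕ} (hk : 1 ≤ k) (hk' : k + 1 ≤ n) :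
    (phiLetter n (k, true)).comp (phiLetter n (k, false)) = AlgHom.id ℤ (FA n) := by
  refine algHom_ext_gen fun i j hij hi hi' hj hj' => ?_
  simp only [AlgHom.comp_apply, AlgHom.id_apply, phiLetter_false_gen k hij hi hi' hj hj']
  unfold phiInvGenImg
  split_ifs <;> subst_vars <;>
    simp (disch := omega) [phiLetter_true_gen, phiGenImg, Ne.symm]

end

noncomputable def phiSigmaEquiv (n k : ℕ) (hk : 1 ≤ k) (hk' : k + 1 ≤ n) : FA n ≃ₐ[ℤ] FA n :=
  AlgEquiv.ofAlgHom (phiLetter n (k, true)) (phiLetter n (k, false))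
    (phiLetter_true_comp_false hk hk') (phiLetter_false_comp_true hk hk')

theorem phi_sigma_bijective_general (n k : ℕ) (hk : 1 ≤ k) (hk' : k + 1 ≤ n) :
    Function.Bijective (phiLetter n (k, true)) :=
  (phiSigmaEquiv n k hk hk').bijective

/-- For every `n ≥ 2` and `1 ≤ k ≤ n−1`, the algebra endomorphism
`φ_{σ_k}` of `𝒜ₙ` is bijective, i.e. an algebra automorphism. -/
theorem phi_sigma_bijective (n k : ℕ) (hn : 2 ≤ n) (hk : 1 ≤ k) (hk' : k + 1 ≤ n) :
    Function.Bijective (phiLetter n (k, true)) :=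
  phi_sigma_bijective_general n k hk hk'
end

section
/- Let p ≥ 1, 1 ≤ l ≤ p, and N ≥ m + p + l − 1; set τ_{a,p} = σ_a σ_{a+1} ⋯ σ_{a+p−1} and κ_{m,l} = τ_{m+l−1,p} τ_{m+l−2,p} ⋯ τ_{m,p}, words in the generators of B_N. Then for all 1 ≤ i < j ≤ N, φ_{κ_{m,l}}(a_{ij}) equals: a_{i+l,j+l} if i, j ∈ X_{m,p}; a_{i−p,j−p} if i, j ∈ X_{m+p,l}; B'(i+l, j−p, X_{m,l}) if i ∈ X_{m,p} and j ∈ X_{m+p,l}; a_{i−p,j} if j ≥ m+l+p and i ∈ X_{m+p,l}; a_{i,j−p} if i < m and j ∈ X_{m+p,l}; A(i, j+l, X_{m,l}) if i < m and j ∈ X_{m,p}; A'(i+l, j, X_{m,l}) if j ≥ m+p+l and i ∈ X_{m,p}; and a_{ij} otherwise. -/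
open scoped TensorProduct

attribute [local instance high] Algebra.toModule

/-!
`κ_{m,l+1} = τ_{m+l,p} κ_{m,l}` and `τ_{a,p+1} = τ_{a,p} σ_{a+p}`, so everything is proved by
induction: on `p` for `τ`, then on `l` for `κ`.

`φ_{τ_{a,p}}` sends `a_{xy}` to `a_{π x, π y}`, where `π` moves the block `[a, a+p)` up by one and
`a + p` down to `a`, unless exactly one of `x, y` lies in the block. For `x` in the block,
`a_{xy} ↦ a_{x+1,y} − a_{x+1,a} a_{a,y}` if `y ∉ [a, a+p]`, and `a_{x,a+p} ↦ −a_{x+1,a}`.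
Applied to the first factor of a path `a_{u y_k} ⋯ a_{y_1 v}` with all `y_i < a` (the other
factors are at most renamed by `π`), this turns the summand of `Y` into those of `Y` and
`Y ∪ {a}`: so the sums `A'` and `B'` over subsets of `X_{m,l}` become the same sums over subsets of
`X_{m,l+1}`, and the sign of the empty path `a_{u,a+p} ↦ −a_{u+1,a}` is the source of the
coefficients `c_Y` of `B'`. The formula for `A` is the image of that for `A'` under the
anti-automorphism `a_{ij} ↦ a_{ji}`, which commutes with every `φ_β`.
-/

section Generators

variable {n : ℕ}

theorem gen_self (x : ℕ) : gen n x x = 0 :=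
  dif_neg fun h => h.1 rfl

theorem gen_eq_zero_of_out_of_range {i j : ℕ} (h : ¬(1 ≤ i ∧ i ≤ n ∧ 1 ≤ j ∧ j ≤ n)) :
    gen n i j = 0 :=
  dif_neg fun h' => h h'.2

theorem phiLetter_gen {k i j : ℕ} (hk : 1 ≤ k) (hkn : k + 1 ≤ n) (hij : i ≠ j) :
    phiLetter n (k, true) (gen n i j) = phiGenImg n k i j := by
  by_cases hv : 1 ≤ i ∧ i ≤ n ∧ 1 ≤ j ∧ j ≤ n
  · rw [gen, dif_pos ⟨hij, hv⟩, phiLetter, FreeAlgebra.lift_ι_apply, if_pos rfl]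
  · rw [gen_eq_zero_of_out_of_range hv, map_zero, phiGenImg]
    split_ifs <;> simp (disch := omega) [gen_eq_zero_of_out_of_range]

end Generators

section Conjugation

variable {n : ℕ}

theorem conj_gen (i j : ℕ) : conj n (gen n i j) = gen n j i := by
  by_cases h : i ≠ j ∧ 1 ≤ i ∧ i ≤ n ∧ 1 ≤ j ∧ j ≤ n
  · rw [gen, dif_pos h, conj, conjHom, FreeAlgebra.lift_ι_apply, MulOpposite.unop_op]
  · have h' : ¬(j ≠ i ∧ 1 ≤ j ∧ j ≤ n ∧ 1 ≤ i ∧ i ≤ n) := by tauto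
    rw [gen, dif_neg h, gen, dif_neg h', conj, map_zero, MulOpposite.unop_zero]

theorem conj_mul' (x y : FA n) : conj n (x * y) = conj n y * conj n x := by
  simp [conj]

theorem conj_add (x y : FA n) : conj n (x + y) = conj n x + conj n y := by
  simp [conj]

theorem conj_sub (x y : FA n) : conj n (x - y) = conj n x - conj n y := by
  simp [conj]

theorem conj_neg (x : FA n) : conj n (-x) = -conj n x := by
  simp [conj]

theorem conj_one : conj n (1 : FA n) = 1 := by
  simp [conj]

theorem conj_algebraMap (r : ℤ) : conj n (algebraMap ℤ (FA n) r) = algebraMap ℤ (FA n) r := by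
  simp [conj]

theorem conj_zsmul (c : ℤ) (x : FA n) : conj n (c • x) = c • conj n x :=
  map_zsmul (conjLin n) c x

theorem conj_sum {α : Type*} (s : Finset α) (f : α → FA n) :
    conj n (∑ a ∈ s, f a) = ∑ a ∈ s, conj n (f a) :=
  map_sum (conjLin n) f s

theorem conj_phiGenImg (k i j : ℕ) (hij : i ≠ j) :
    conj n (phiGenImg n k i j) = phiGenImg n k j i := by
  unfold phiGenImg
  split_ifs <;> first | omega | simp [conj_gen, conj_mul', conj_neg, conj_sub]

theorem conj_phiInvGenImg (k i j : ℕ) (hij : i ≠ j) :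
    conj n (phiInvGenImg n k i j) = phiInvGenImg n k j i := by
  unfold phiInvGenImg
  split_ifs <;> first | omega | simp [conj_gen, conj_mul', conj_neg, conj_sub]

theorem phiLetter_conj (l : ℕ × Bool) (x : FA n) :
    phiLetter n l (conj n x) = conj n (phiLetter n l x) := by
  induction x using FreeAlgebra.induction with
  | grade0 r => rw [conj_algebraMap, AlgHom.commutes, conj_algebraMap]
  | grade1 g =>
    obtain ⟨⟨i, j⟩, hg⟩ := g
    have hji : j ≠ i ∧ 1 ≤ j ∧ j ≤ n ∧ 1 ≤ i ∧ i ≤ n := by omega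
    have hgen : FreeAlgebra.ι ℤ ⟨(i, j), hg⟩ = gen n i j := by rw [gen, dif_pos hg]
    rw [hgen, conj_gen]
    simp only [phiLetter, gen, dif_pos hg, dif_pos hji, FreeAlgebra.lift_ι_apply]
    split_ifs
    · exact (conj_phiGenImg _ _ _ hg.1).symm
    · exact (conj_phiInvGenImg _ _ _ hg.1).symm
  | mul a b ha hb => rw [conj_mul', map_mul, map_mul, ha, hb, conj_mul']
  | add a b ha hb => rw [conj_add, map_add, map_add, ha, hb, conj_add]

theorem phiWord_append (w₁ w₂ : List (ℕ × Bool)) (x : FA n) :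
    phiWord n (w₁ ++ w₂) x = phiWord n w₁ (phiWord n w₂ x) := by
  induction w₁ with
  | nil => rfl
  | cons l w ih => exact congrArg (phiLetter n l) ih

theorem phiWord_conj (w : List (ℕ × Bool)) (x : FA n) :
    phiWord n w (conj n x) = conj n (phiWord n w x) := by
  induction w with
  | nil => rfl
  | cons l w ih => exact (congrArg (phiLetter n l) ih).trans (phiLetter_conj l _)

theorem phiWord_gen_swap (w : List (ℕ × Bool)) (i j : ℕ) :
    phiWord n w (gen n j i) = conj n (phiWord n w (gen n i j)) := by
  rw [← phiWord_conj, conj_gen]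

end Conjugation

section Paths

variable {n : ℕ}

theorem map_pathFactors (F : FA n →ₐ[ℤ] FA n) (f : ℕ → ℕ) (L : List ℕ)
    (hF : ∀ x ∈ L, ∀ y ∈ L, F (gen n x y) = gen n (f x) (f y)) :
    F (pathFactors n L) = pathFactors n (L.map f) := by
  induction L with
  | nil => exact map_one F
  | cons x L ih =>
    cases L with
    | nil => exact map_one F
    | cons y L =>
      rw [pathFactors, map_mul, hF x (by simp) y (by simp),
        ih fun u hu v hv => hF u (by simp [hu]) v (by simp [hv])]
      rfl

theorem pathFactors_append_pair (L : List ℕ) (y x : ℕ) :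
    pathFactors n (L ++ [y, x]) = pathFactors n (L ++ [y]) * gen n y x := by
  induction L with
  | nil => simp [pathFactors]
  | cons z L ih =>
    cases L with
    | nil => simp [pathFactors]
    | cons w L => simp only [List.cons_append] at ih ⊢; rw [pathFactors, pathFactors, ih, mul_assoc]

theorem conj_pathFactors (L : List ℕ) : conj n (pathFactors n L) = pathFactors n L.reverse := by
  induction L with
  | nil => exact conj_one
  | cons x L ih =>
    cases L with
    | nil => exact conj_one
    | cons y L =>
      rw [pathFactors, conj_mul', ih, conj_gen]
      simp only [List.reverse_cons, List.append_assoc, List.cons_append, List.nil_append,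
        pathFactors_append_pair]

/-- The path `a_{i y_k} a_{y_k y_{k−1}} ⋯ a_{y_1 j}` for `Y = {y_1 < ⋯ < y_k}`: the summands of
`A'exp` and `B'exp`. -/
noncomputable def descPath (n i : ℕ) (Y : Finset ℕ) (j : ℕ) : FA n :=
  pathFactors n (i :: ((Y.sort (· ≤ ·)).reverse ++ [j]))

theorem descPath_empty (i j : ℕ) : descPath n i ∅ j = gen n i j := by
  simp [descPath, pathFactors]

theorem sort_insert_reverse {a : ℕ} {Y : Finset ℕ} (hY : ∀ y ∈ Y, y < a) :
    ((insert a Y).sort (· ≤ ·)).reverse = a :: (Y.sort (· ≤ ·)).reverse := by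
  refine List.Pairwise.eq_of_mem_iff (r := (· > ·)) ?_ ?_ fun x => by simp
  · exact List.pairwise_reverse.2 (Finset.sortedLT_sort _).pairwise
  · refine List.pairwise_cons.2 ⟨fun y hy => hY y (by simpa using hy), ?_⟩
    exact List.pairwise_reverse.2 (Finset.sortedLT_sort _).pairwise

theorem descPath_insert {a : ℕ} {Y : Finset ℕ} (hY : ∀ y ∈ Y, y < a) (i j : ℕ) :
    descPath n i (insert a Y) j = gen n i a * descPath n a Y j := by
  rw [descPath, sort_insert_reverse hY, List.cons_append, pathFactors, descPath]

theorem A'exp_eq_sum (i j : ℕ) (X : Finset ℕ) :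
    A'exp n i j X = ∑ Y ∈ X.powerset, ((-1 : ℤ) ^ Y.card) • descPath n i Y j := rfl

theorem A'exp_empty (i j : ℕ) : A'exp n i j ∅ = gen n i j := by
  rw [A'exp_eq_sum, Finset.powerset_empty, Finset.sum_singleton, descPath_empty]
  exact one_smul ℤ _

theorem conj_A'exp (i j : ℕ) (X : Finset ℕ) : conj n (A'exp n i j X) = Aexp n j i X := by
  rw [A'exp_eq_sum, conj_sum, Aexp]
  refine Finset.sum_congr rfl fun Y _ => ?_
  rw [conj_zsmul, descPath, conj_pathFactors]
  simp

theorem A'exp_insert {a : ℕ} {X : Finset ℕ} (hX : ∀ x ∈ X, x < a) (i j : ℕ) :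
    A'exp n i j (insert a X) =
      ∑ Y ∈ X.powerset, ((-1 : ℤ) ^ Y.card) • (descPath n i Y j - descPath n i (insert a Y) j) := by
  have ha : a ∉ X := fun h => (hX a h).false
  rw [A'exp_eq_sum, Finset.sum_powerset_insert ha, ← Finset.sum_add_distrib]
  refine Finset.sum_congr rfl fun Y hY => ?_
  have haY : a ∉ Y := fun h => ha (Finset.mem_powerset.1 hY h)
  rw [Finset.card_insert_of_notMem haY, pow_succ, mul_neg_one, neg_smul, ← sub_eq_add_neg]
  exact (smul_sub _ _ _).symm

end Paths

section Signs

variable {n : ℕ}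

theorem Finset.min_insert_eq_coe_iff {a j : ℕ} (hj : j < a) (Y : Finset ℕ) :
    (insert a Y).min = (j : WithTop ℕ) ↔ Y.min = (j : WithTop ℕ) := by
  rw [Finset.min_insert, Nat.cast_withTop]
  induction Y.min using WithTop.recTopCoe with
  | top => simp [hj.ne']
  | coe y =>
    rw [← WithTop.coe_min, WithTop.coe_inj, WithTop.coe_inj]
    omega

theorem Finset.min_insert_ne_of_forall_lt {a y : ℕ} {Y : Finset ℕ} (hY : ∀ y ∈ Y, y < a)
    (hy : y ∈ Y) : (insert a Y).min ≠ (a : WithTop ℕ) := by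
  have hle : Y.min ≤ WithTop.some a :=
    (Finset.min_le hy).trans (WithTop.coe_le_coe.2 (hY y hy).le)
  rw [Finset.min_insert, min_eq_right hle, Nat.cast_withTop]
  exact fun h => (hY a (Finset.mem_of_min h)).false

/-- The coefficient `c_Y` of `B'(i, j, X)`. -/
def bCoeff (j : ℕ) (Y : Finset ℕ) : ℤ :=
  if ∀ y ∈ Y, j < y then (-1) ^ (Y.card + 1) else (-1) ^ Y.card

theorem B'exp_eq_sum (i j : ℕ) (X : Finset ℕ) :
    B'exp n i j X = ∑ Y ∈ X.powerset with Y.min ≠ (j : WithTop ℕ), bCoeff j Y • descPath n i Y j :=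
  rfl

theorem bCoeff_insert {a j : ℕ} {Y : Finset ℕ} (hj : j < a) (haY : a ∉ Y) :
    bCoeff j (insert a Y) = -bCoeff j Y := by
  simp only [bCoeff, Finset.forall_mem_insert, hj, true_and, Finset.card_insert_of_notMem haY]
  split_ifs <;> ring

theorem bCoeff_empty (j : ℕ) : bCoeff j ∅ = -1 := by
  simp [bCoeff]

theorem bCoeff_of_exists_lt {j : ℕ} {Y : Finset ℕ} (h : ∃ y ∈ Y, y < j) :
    bCoeff j Y = (-1) ^ Y.card := by
  obtain ⟨y, hy, hyj⟩ := h
  exact if_neg fun h => (h y hy).not_gt hyj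

theorem B'exp_insert {a j : ℕ} {X : Finset ℕ} (hX : ∀ x ∈ X, x < a) (hj : j < a) (i : ℕ) :
    B'exp n i j (insert a X) = ∑ Y ∈ X.powerset with Y.min ≠ (j : WithTop ℕ),
      bCoeff j Y • (descPath n i Y j - descPath n i (insert a Y) j) := by
  have ha : a ∉ X := fun h => (hX a h).false
  rw [B'exp_eq_sum, Finset.sum_filter, Finset.sum_filter, Finset.sum_powerset_insert ha,
    ← Finset.sum_add_distrib]
  refine Finset.sum_congr rfl fun Y hY => ?_
  have haY : a ∉ Y := fun h => ha (Finset.mem_powerset.1 hY h)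
  by_cases hmin : Y.min = (j : WithTop ℕ)
  · rw [if_neg (not_not.2 hmin), if_neg (not_not.2 hmin),
      if_neg (not_not.2 ((Finset.min_insert_eq_coe_iff hj Y).2 hmin)), add_zero]
  · rw [if_pos hmin, if_pos hmin, if_pos (mt (Finset.min_insert_eq_coe_iff hj Y).1 hmin),
      bCoeff_insert hj haY, neg_smul, ← sub_eq_add_neg]
    exact (smul_sub _ _ _).symm

theorem B'exp_insert_self {a : ℕ} {X : Finset ℕ} (hX : ∀ x ∈ X, x < a) (i : ℕ) :
    B'exp n i a (insert a X) = ∑ Y ∈ X.powerset,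
      (bCoeff a Y • descPath n i Y a - ((-1 : ℤ) ^ Y.card) • descPath n i (insert a Y) a) := by
  have ha : a ∉ X := fun h => (hX a h).false
  rw [B'exp_eq_sum, Finset.sum_filter, Finset.sum_powerset_insert ha, ← Finset.sum_add_distrib]
  refine Finset.sum_congr rfl fun Y hY => ?_
  have hYa : ∀ y ∈ Y, y < a := fun y hy => hX y (Finset.mem_powerset.1 hY hy)
  have haY : a ∉ Y := fun h => (hYa a h).false
  have hminY : Y.min ≠ (a : WithTop ℕ) := fun h => (hYa a (Finset.mem_of_min h)).false
  rw [if_pos hminY]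
  rcases Y.eq_empty_or_nonempty with rfl | hne
  · rw [descPath_insert (by simp), descPath_empty, descPath_empty, gen_self, mul_zero]
    simp
  · obtain ⟨y, hy⟩ := hne
    rw [if_pos (Finset.min_insert_ne_of_forall_lt hYa hy),
      bCoeff_of_exists_lt ⟨y, Finset.mem_insert_of_mem hy, hYa y hy⟩,
      bCoeff_of_exists_lt ⟨y, hy, hYa y hy⟩, Finset.card_insert_of_notMem haY, pow_succ,
      mul_neg_one, neg_smul, ← sub_eq_add_neg]
    rfl

end Signs

/-- The strand permutation of `κ_{m,l}`, and for `l = 1` of `τ_{m,p}`: the block `X_{m,p}` moves up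
by `l` and the block `X_{m+p,l}` down by `p`. -/
def kappaPerm (m p l x : ℕ) : ℕ :=
  if x ∈ Finset.Ico m (m + p) then x + l
  else if x ∈ Finset.Ico (m + p) (m + p + l) then x - p
  else x

section KappaPerm

theorem kappaPerm_zero (m p x : ℕ) : kappaPerm m p 0 x = x := by
  unfold kappaPerm; simp only [Finset.mem_Ico]; split_ifs <;> omega

theorem kappaPerm_mem_Ico_iff (m p l x : ℕ) :
    kappaPerm m p l x ∈ Finset.Ico (m + l) (m + l + p) ↔ x ∈ Finset.Ico m (m + p) := by
  unfold kappaPerm; simp only [Finset.mem_Ico]; split_ifs <;> omega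

theorem kappaPerm_one_kappaPerm (m p l x : ℕ) :
    kappaPerm (m + l) p 1 (kappaPerm m p l x) = kappaPerm m p (l + 1) x := by
  unfold kappaPerm; simp only [Finset.mem_Ico]; split_ifs <;> omega

theorem kappaPerm_of_mem {m p l x : ℕ} (hx : x ∈ Finset.Ico m (m + p)) :
    kappaPerm m p l x = x + l :=
  if_pos hx

theorem kappaPerm_of_mem_Ico_add {m p l x : ℕ} (hx : x ∈ Finset.Ico (m + p) (m + p + l)) :
    kappaPerm m p l x = x - p := by
  rw [kappaPerm, if_neg (by grind), if_pos hx]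

theorem kappaPerm_of_not_mem {m p l x : ℕ} (hx : x ∉ Finset.Ico m (m + p + l)) :
    kappaPerm m p l x = x := by
  rw [kappaPerm, if_neg (by grind), if_neg (by grind)]

end KappaPerm

section Tau

variable {n a p : ℕ}

theorem phiWord_tauWord_succ_gen (ha : 1 ≤ a) (hn : a + p + 1 ≤ n) {i j : ℕ} (hij : i ≠ j) :
    phiWord n (tauWord a (p + 1)) (gen n i j) =
      phiWord n (tauWord a p) (phiGenImg n (a + p) i j) := by
  rw [tauWord, List.range_succ, List.map_append, phiWord_append, List.map_singleton]
  exact congrArg _ (phiLetter_gen (by omega) hn hij)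

theorem phiWord_tauWord_gen_of_not_mem (ha : 1 ≤ a) (hn : a + p ≤ n) {x y : ℕ}
    (hx : x ∉ Finset.Ico a (a + p)) (hy : y ∉ Finset.Ico a (a + p)) :
    phiWord n (tauWord a p) (gen n x y) = gen n (kappaPerm a p 1 x) (kappaPerm a p 1 y) := by
  induction p generalizing x y with
  | zero =>
    show gen n x y = _
    simp only [kappaPerm, Finset.mem_Ico]
    congr 1 <;> split_ifs <;> omega
  | succ p ih =>
    simp only [Finset.mem_Ico] at hx hy
    rcases eq_or_ne x y with rfl | hxy
    · rw [gen_self, map_zero, gen_self]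
    rw [phiWord_tauWord_succ_gen ha hn hxy, phiGenImg]
    split_ifs
    all_goals first
      | omega
      | (rw [ih (by omega) (by grind) (by grind)]
         simp only [kappaPerm, Finset.mem_Ico]; congr 1 <;> split_ifs <;> omega)

theorem phiWord_tauWord_gen_top (ha : 1 ≤ a) (hn : a + p ≤ n) {x : ℕ}
    (hx : x ∈ Finset.Ico a (a + p)) :
    phiWord n (tauWord a p) (gen n x (a + p)) = -gen n (x + 1) a := by
  induction p generalizing x with
  | zero => simp at hx
  | succ p ih =>
    simp only [Finset.mem_Ico] at hx
    rw [← add_assoc, phiWord_tauWord_succ_gen ha hn (by omega), phiGenImg]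
    rcases eq_or_ne x (a + p) with rfl | hxk
    · rw [if_pos rfl, if_pos rfl, map_neg,
        phiWord_tauWord_gen_of_not_mem ha (by omega) (by grind) (by grind)]
      simp (disch := omega) only [kappaPerm, Finset.mem_Ico, if_pos, if_neg, add_tsub_cancel_right]
    · rw [if_neg hxk, if_neg (by omega), if_neg (by omega), if_pos rfl, ih (by omega) (by grind)]

theorem phiWord_tauWord_gen_of_mem_of_not_mem (ha : 1 ≤ a) (hn : a + p ≤ n) {x y : ℕ}
    (hx : x ∈ Finset.Ico a (a + p)) (hy : y ∉ Finset.Icc a (a + p)) :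
    phiWord n (tauWord a p) (gen n x y) = gen n (x + 1) y - gen n (x + 1) a * gen n a y := by
  induction p generalizing x with
  | zero => simp at hx
  | succ p ih =>
    simp only [Finset.mem_Ico, Finset.mem_Icc] at hx hy
    rw [phiWord_tauWord_succ_gen ha hn (by omega), phiGenImg]
    rcases eq_or_ne x (a + p) with rfl | hxk
    · rw [if_pos rfl, if_neg (by omega), map_sub, map_mul]
      have hn' : a + p ≤ n := by omega
      simp (disch := grind) only [phiWord_tauWord_gen_of_not_mem ha hn']
      simp (disch := omega) only [kappaPerm, Finset.mem_Ico, if_pos, if_neg, add_tsub_cancel_right]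
    · rw [if_neg hxk, if_neg (by omega), if_neg (by omega), if_neg (by omega),
        ih (by omega) (by grind) (by grind)]

theorem phiWord_tauWord_gen_of_mem (ha : 1 ≤ a) (hn : a + p ≤ n) {x y : ℕ}
    (hx : x ∈ Finset.Ico a (a + p)) (hy : y ∈ Finset.Ico a (a + p)) :
    phiWord n (tauWord a p) (gen n x y) = gen n (x + 1) (y + 1) := by
  induction p generalizing x y with
  | zero => simp at hx
  | succ p ih =>
    simp only [Finset.mem_Ico] at hx hy
    have hn' : a + p ≤ n := by omega
    rcases eq_or_ne x y with rfl | hxy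
    · rw [gen_self, map_zero, gen_self]
    rw [phiWord_tauWord_succ_gen ha hn hxy, phiGenImg]
    rcases eq_or_ne x (a + p) with rfl | hxk
    · rw [if_pos rfl, if_neg (by omega), map_sub, map_mul, phiWord_gen_swap _ y,
        phiWord_gen_swap _ y,
        phiWord_tauWord_gen_of_mem_of_not_mem (x := y) (y := a + p + 1) ha hn' (by grind)
          (by grind),
        phiWord_tauWord_gen_top (x := y) ha hn' (by grind),
        phiWord_tauWord_gen_of_not_mem (x := a + p + 1) (y := a + p) ha hn' (by grind) (by grind)]
      simp (disch := omega) only [kappaPerm, Finset.mem_Ico, if_pos, if_neg, add_tsub_cancel_right,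
        conj_sub, conj_mul', conj_neg, conj_gen, mul_neg, sub_neg_eq_add, sub_add_cancel]
    rcases eq_or_ne y (a + p) with rfl | hyk
    · rw [if_neg hxk, if_neg (by omega), if_pos rfl, map_sub, map_mul,
        phiWord_tauWord_gen_of_mem_of_not_mem (x := x) (y := a + p + 1) ha hn' (by grind)
          (by grind),
        phiWord_tauWord_gen_top (x := x) ha hn' (by grind),
        phiWord_tauWord_gen_of_not_mem (x := a + p) (y := a + p + 1) ha hn' (by grind) (by grind)]
      simp (disch := omega) only [kappaPerm, Finset.mem_Ico, if_pos, if_neg, add_tsub_cancel_right,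
        neg_mul, sub_neg_eq_add, sub_add_cancel]
    rw [if_neg hxk, if_neg (by omega), if_neg hyk, if_neg (by omega), ih hn' (by grind) (by grind)]

theorem phiWord_tauWord_gen (ha : 1 ≤ a) (hn : a + p ≤ n) {x y : ℕ}
    (hxy : x ∈ Finset.Ico a (a + p) ↔ y ∈ Finset.Ico a (a + p)) :
    phiWord n (tauWord a p) (gen n x y) = gen n (kappaPerm a p 1 x) (kappaPerm a p 1 y) := by
  by_cases hx : x ∈ Finset.Ico a (a + p)
  · rw [phiWord_tauWord_gen_of_mem ha hn hx (hxy.1 hx), kappaPerm, kappaPerm, if_pos hx,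
      if_pos (hxy.1 hx)]
  · exact phiWord_tauWord_gen_of_not_mem ha hn hx (mt hxy.2 hx)

theorem phiWord_tauWord_descPath_of_lt (ha : 1 ≤ a) (hn : a + p ≤ n) {w v : ℕ} {Y : Finset ℕ}
    (hw : w < a) (hY : ∀ y ∈ Y, y < a) (hv : v ∉ Finset.Ico a (a + p)) :
    phiWord n (tauWord a p) (descPath n w Y v) = descPath n w Y (kappaPerm a p 1 v) := by
  have hfix : ∀ x < a, kappaPerm a p 1 x = x := fun x hx => kappaPerm_of_not_mem (by grind)
  have hL : ∀ x ∈ w :: ((Y.sort (· ≤ ·)).reverse ++ [v]), x ∉ Finset.Ico a (a + p) := by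
    simp only [List.mem_cons, List.mem_append, List.mem_reverse, Finset.mem_sort,
      List.not_mem_nil, or_false]
    rintro x (rfl | hx | rfl)
    · grind
    · have := hY x hx; grind
    · exact hv
  rw [descPath, map_pathFactors _ (kappaPerm a p 1) _
    fun x hx y hy => phiWord_tauWord_gen_of_not_mem ha hn (hL x hx) (hL y hy)]
  simp only [List.map_cons, List.map_append, List.map_reverse, hfix w hw]
  rw [List.map_congr_left fun y hy => hfix y (hY y ((Finset.mem_sort _).1 hy)), List.map_id']
  rfl

theorem phiWord_tauWord_descPath_of_nonempty (ha : 1 ≤ a) (hn : a + p ≤ n) {u v : ℕ}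
    {Y : Finset ℕ} (hu : u ∈ Finset.Ico a (a + p)) (hY : ∀ y ∈ Y, y < a) (hne : Y.Nonempty)
    (hv : v ∉ Finset.Ico a (a + p)) :
    phiWord n (tauWord a p) (descPath n u Y v) =
      descPath n (u + 1) Y (kappaPerm a p 1 v) -
        descPath n (u + 1) (insert a Y) (kappaPerm a p 1 v) := by
  set M := Y.max' hne
  have hM : M < a := hY M (Y.max'_mem hne)
  have hlt : ∀ y ∈ Y.erase M, y < M := fun y hy =>
    lt_of_le_of_ne (Y.le_max' y (Finset.mem_of_mem_erase hy)) (Finset.ne_of_mem_erase hy)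
  rw [descPath_insert hY, ← Finset.insert_erase (Y.max'_mem hne), descPath_insert hlt,
    descPath_insert hlt, descPath_insert hlt, map_mul,
    phiWord_tauWord_descPath_of_lt ha hn hM (fun y hy => (hlt y hy).trans hM) hv,
    phiWord_tauWord_gen_of_mem_of_not_mem ha hn hu (by grind), sub_mul, mul_assoc]

theorem phiWord_tauWord_descPath (ha : 1 ≤ a) (hn : a + p ≤ n) {u v : ℕ} {Y : Finset ℕ}
    (hu : u ∈ Finset.Ico a (a + p)) (hY : ∀ y ∈ Y, y < a) (hv : v ∉ Finset.Icc a (a + p)) :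
    phiWord n (tauWord a p) (descPath n u Y v) =
      descPath n (u + 1) Y v - descPath n (u + 1) (insert a Y) v := by
  rcases Y.eq_empty_or_nonempty with rfl | hne
  · rw [descPath_insert hY, descPath_empty, descPath_empty, descPath_empty,
      phiWord_tauWord_gen_of_mem_of_not_mem ha hn hu hv]
  · rw [phiWord_tauWord_descPath_of_nonempty ha hn hu hY hne (by grind),
      kappaPerm_of_not_mem (by grind)]

theorem phiWord_tauWord_descPath_top (ha : 1 ≤ a) (hn : a + p ≤ n) {u : ℕ} {Y : Finset ℕ}
    (hu : u ∈ Finset.Ico a (a + p)) (hY : ∀ y ∈ Y, y < a) (hne : Y.Nonempty) :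
    phiWord n (tauWord a p) (descPath n u Y (a + p)) =
      descPath n (u + 1) Y a - descPath n (u + 1) (insert a Y) a := by
  rw [phiWord_tauWord_descPath_of_nonempty ha hn hu hY hne (by simp),
    kappaPerm_of_mem_Ico_add (by simp), add_tsub_cancel_right]

theorem phiWord_tauWord_A'exp (ha : 1 ≤ a) (hn : a + p ≤ n) {m u v : ℕ} (hma : m ≤ a)
    (hu : u ∈ Finset.Ico a (a + p)) (hv : v ∉ Finset.Icc a (a + p)) :
    phiWord n (tauWord a p) (A'exp n u v (Finset.Ico m a)) =
      A'exp n (u + 1) v (Finset.Ico m (a + 1)) := by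
  rw [Nat.Ico_succ_right_eq_insert_Ico hma, A'exp_insert (by simp), A'exp_eq_sum, map_sum]
  refine Finset.sum_congr rfl fun Y hY => ?_
  rw [map_zsmul, phiWord_tauWord_descPath ha hn hu (by grind) hv]

theorem phiWord_tauWord_B'exp (ha : 1 ≤ a) (hn : a + p ≤ n) {m u v : ℕ} (hma : m ≤ a)
    (hu : u ∈ Finset.Ico a (a + p)) (hv : v ∈ Finset.Ico m a) :
    phiWord n (tauWord a p) (B'exp n u v (Finset.Ico m a)) =
      B'exp n (u + 1) v (Finset.Ico m (a + 1)) := by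
  rw [Nat.Ico_succ_right_eq_insert_Ico hma, B'exp_insert (by simp) (by grind), B'exp_eq_sum,
    map_sum]
  refine Finset.sum_congr rfl fun Y hY => ?_
  rw [map_zsmul, phiWord_tauWord_descPath ha hn hu (by grind) (by grind)]

theorem phiWord_tauWord_A'exp_top (ha : 1 ≤ a) (hn : a + p ≤ n) {m u : ℕ} (hma : m ≤ a)
    (hu : u ∈ Finset.Ico a (a + p)) :
    phiWord n (tauWord a p) (A'exp n u (a + p) (Finset.Ico m a)) =
      B'exp n (u + 1) a (Finset.Ico m (a + 1)) := by
  rw [Nat.Ico_succ_right_eq_insert_Ico hma, B'exp_insert_self (by simp), A'exp_eq_sum, map_sum]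
  refine Finset.sum_congr rfl fun Y hY => ?_
  have hYa : ∀ y ∈ Y, y < a := by grind
  rcases Y.eq_empty_or_nonempty with rfl | ⟨y, hy⟩
  · rw [descPath_insert hYa, descPath_empty, descPath_empty, descPath_empty, gen_self, mul_zero,
      map_zsmul, phiWord_tauWord_gen_top ha hn hu, bCoeff_empty]
    simp only [Finset.card_empty, pow_zero, one_smul, neg_smul, sub_zero]
    exact congrArg Neg.neg (one_smul ℤ (gen n (u + 1) a)).symm
  · rw [map_zsmul, phiWord_tauWord_descPath_top ha hn hu hYa ⟨y, hy⟩,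
      bCoeff_of_exists_lt ⟨y, hy, hYa y hy⟩]
    exact smul_sub _ _ _

end Tau

section Kappa

variable {n m p : ℕ}

theorem phiWord_kappaWord_succ (l : ℕ) (x : FA n) :
    phiWord n (kappaWord m (l + 1) p) x =
      phiWord n (tauWord (m + l) p) (phiWord n (kappaWord m l p) x) := by
  rw [kappaWord, kappaWord, List.range_succ, List.reverse_append, List.map_append,
    List.flatten_append]
  simp [phiWord_append]

theorem phiWord_kappaWord_gen (hm : 1 ≤ m) {l : ℕ} (hn : m + p + l ≤ n + 1) {x y : ℕ}
    (hxy : x ∈ Finset.Ico m (m + p) ↔ y ∈ Finset.Ico m (m + p)) :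
    phiWord n (kappaWord m l p) (gen n x y) = gen n (kappaPerm m p l x) (kappaPerm m p l y) := by
  induction l with
  | zero => rw [kappaPerm_zero, kappaPerm_zero]; rfl
  | succ l ih =>
    rw [phiWord_kappaWord_succ, ih (by omega), phiWord_tauWord_gen (by omega) (by omega)
      (by rw [kappaPerm_mem_Ico_iff, kappaPerm_mem_Ico_iff]; exact hxy),
      kappaPerm_one_kappaPerm, kappaPerm_one_kappaPerm]

theorem phiWord_kappaWord_gen_of_mem_of_not_mem (hm : 1 ≤ m) {l : ℕ} (hn : m + p + l ≤ n + 1)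
    {x y : ℕ} (hx : x ∈ Finset.Ico m (m + p)) (hy : y ∉ Finset.Ico m (m + p + l)) :
    phiWord n (kappaWord m l p) (gen n x y) = A'exp n (x + l) y (Finset.Ico m (m + l)) := by
  induction l with
  | zero => rw [Nat.add_zero, Nat.add_zero, Finset.Ico_self, A'exp_empty]; rfl
  | succ l ih =>
    simp only [Finset.mem_Ico] at hx hy
    rw [phiWord_kappaWord_succ, ih (by omega) (by grind),
      phiWord_tauWord_A'exp (by omega) (by omega) (by omega) (by grind) (by grind)]
    rfl

theorem phiWord_kappaWord_gen_of_mem_of_mem (hm : 1 ≤ m) {l : ℕ} (hn : m + p + l ≤ n + 1)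
    {x y : ℕ} (hx : x ∈ Finset.Ico m (m + p)) (hy : y ∈ Finset.Ico (m + p) (m + p + l)) :
    phiWord n (kappaWord m l p) (gen n x y) = B'exp n (x + l) (y - p) (Finset.Ico m (m + l)) := by
  induction l with
  | zero => simp at hy
  | succ l ih =>
    simp only [Finset.mem_Ico] at hx hy
    rw [phiWord_kappaWord_succ]
    rcases (show y < m + p + l ∨ y = m + p + l by omega) with hyl | rfl
    · rw [ih (by omega) (by grind),
        phiWord_tauWord_B'exp (by omega) (by omega) (by omega) (by grind) (by grind)]
      rfl
    · rw [phiWord_kappaWord_gen_of_mem_of_not_mem hm (by omega) (by simpa) (by simp),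
        show m + p + l = m + l + p by omega,
        phiWord_tauWord_A'exp_top (by omega) (by omega) (by omega) (by grind),
        add_tsub_cancel_right]
      rfl

end Kappa

theorem phi_kappa_formula_general (N m p l : ℕ) (hm : 1 ≤ m)
    (hN : m + p + l ≤ N + 1)
    (i j : ℕ) (hij : i < j) :
    phiWord N (kappaWord m l p) (gen N i j) =
      if i ∈ Finset.Ico m (m+p) ∧ j ∈ Finset.Ico m (m+p) then gen N (i+l) (j+l)
      else if i ∈ Finset.Ico (m+p) (m+p+l) ∧ j ∈ Finset.Ico (m+p) (m+p+l) then
        gen N (i-p) (j-p)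
      else if i ∈ Finset.Ico m (m+p) ∧ j ∈ Finset.Ico (m+p) (m+p+l) then
        B'exp N (i+l) (j-p) (Finset.Ico m (m+l))
      else if m + l + p ≤ j ∧ i ∈ Finset.Ico (m+p) (m+p+l) then gen N (i-p) j
      else if i < m ∧ j ∈ Finset.Ico (m+p) (m+p+l) then gen N i (j-p)
      else if i < m ∧ j ∈ Finset.Ico m (m+p) then Aexp N i (j+l) (Finset.Ico m (m+l))
      else if m + p + l ≤ j ∧ i ∈ Finset.Ico m (m+p) then A'exp N (i+l) j (Finset.Ico m (m+l))
      else gen N i j := by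
  split_ifs with hA hB hC hD hE hF hG
  · rw [phiWord_kappaWord_gen hm hN (iff_of_true hA.1 hA.2), kappaPerm_of_mem hA.1,
      kappaPerm_of_mem hA.2]
  · rw [phiWord_kappaWord_gen hm hN (by grind), kappaPerm_of_mem_Ico_add hB.1,
      kappaPerm_of_mem_Ico_add hB.2]
  · exact phiWord_kappaWord_gen_of_mem_of_mem hm hN hC.1 hC.2
  · rw [phiWord_kappaWord_gen hm hN (by grind), kappaPerm_of_mem_Ico_add hD.2,
      kappaPerm_of_not_mem (by grind)]
  · rw [phiWord_kappaWord_gen hm hN (by grind), kappaPerm_of_not_mem (by grind),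
      kappaPerm_of_mem_Ico_add hE.2]
  · rw [phiWord_gen_swap, phiWord_kappaWord_gen_of_mem_of_not_mem hm hN hF.2 (by grind),
      conj_A'exp]
  · exact phiWord_kappaWord_gen_of_mem_of_not_mem hm hN hG.2 (by grind)
  · rw [phiWord_kappaWord_gen hm hN (by grind), kappaPerm_of_not_mem (by grind),
      kappaPerm_of_not_mem (by grind)]

/-- The action of `φ_{κ_{m,l}}` on the generators `a_{ij}`, `i < j`, in terms of
the expressions `A`, `A'`, `B'` and the blocks `X_{m,p} = [m, m+p)`, `X_{m+p,l} = [m+p, m+p+l)`. -/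
theorem phi_kappa_formula (N m p l : ℕ) (hm : 1 ≤ m) (hp : 1 ≤ p) (hl1 : 1 ≤ l) (hlp : l ≤ p)
    (hN : m + p + l ≤ N + 1)
    (i j : ℕ) (h1 : 1 ≤ i) (hij : i < j) (hjN : j ≤ N) :
    phiWord N (kappaWord m l p) (gen N i j) =
      if i ∈ Finset.Ico m (m+p) ∧ j ∈ Finset.Ico m (m+p) then gen N (i+l) (j+l)
      else if i ∈ Finset.Ico (m+p) (m+p+l) ∧ j ∈ Finset.Ico (m+p) (m+p+l) then
        gen N (i-p) (j-p)
      else if i ∈ Finset.Ico m (m+p) ∧ j ∈ Finset.Ico (m+p) (m+p+l) then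
        B'exp N (i+l) (j-p) (Finset.Ico m (m+l))
      else if m + l + p ≤ j ∧ i ∈ Finset.Ico (m+p) (m+p+l) then gen N (i-p) j
      else if i < m ∧ j ∈ Finset.Ico (m+p) (m+p+l) then gen N i (j-p)
      else if i < m ∧ j ∈ Finset.Ico m (m+p) then Aexp N i (j+l) (Finset.Ico m (m+l))
      else if m + p + l ≤ j ∧ i ∈ Finset.Ico m (m+p) then A'exp N (i+l) j (Finset.Ico m (m+l))
      else gen N i j :=
  phi_kappa_formula_general N m p l hm hN i j hij
end
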